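/- arXiv:2603.16369 — 8 statements merged into one kernel-verified Lean document; each statement's English description precedes it below -/
import Mathlib

section
/- If f(z) = Σ_{n≥0} a_n z^n is holomorphic on the unit disk D with |f(z)| ≤ 1 for all z ∈ D, then |a_n| ≤ 1 - |a_0|^2 for all n ≥ 1. -/
/-!
For `n = 1` this is the Schwarz–Pick inequality at the origin: composing `f` with the disc
automorphism `w ↦ (w - a₀) / (1 - conj a₀ * w)` and applying the Schwarz lemma gives
`|f'(0)| ≤ 1 - |f(0)|²` (first for `|f| < 1`, then for `|f| ≤ 1` by applying it to `t f` and
letting `t → 1`). For general `n`, averaging `f` over the rotations `z ↦ ωᵏ z` by the `n`-th roots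
of unity keeps only the terms `a_{nj} z^{nj}`, so `g(w) = (1/n) ∑ₖ f(ωᵏ w^{1/n})` is bounded by `1`
on the disc with Taylor coefficients `a_{nj}`; its coefficients of index `0` and `1` are `a₀` and
`aₙ`.
-/

open Metric Set Filter Topology ComplexConjugate Finset

namespace Complex

theorem normSq_one_sub_conj_mul_sub_normSq_sub (c w : ℂ) :
    normSq (1 - conj c * w) - normSq (w - c) = (1 - normSq c) * (1 - normSq w) := by
  simp only [normSq_apply, sub_re, sub_im, mul_re, mul_im, conj_re, conj_im, one_re, one_im]
  ring

theorem norm_sub_lt_norm_one_sub_conj_mul {c w : ℂ} (hc : ‖c‖ < 1) (hw : ‖w‖ < 1) :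
    ‖w - c‖ < ‖1 - conj c * w‖ := by
  have key := normSq_one_sub_conj_mul_sub_normSq_sub c w
  simp only [normSq_eq_norm_sq] at key
  have hpos : 0 < (1 - ‖c‖ ^ 2) * (1 - ‖w‖ ^ 2) := by
    apply mul_pos <;> nlinarith [norm_nonneg c, norm_nonneg w]
  exact lt_of_pow_lt_pow_left₀ 2 (norm_nonneg _) (by linarith)

theorem norm_deriv_le_one_sub_sq_of_mapsTo_ball {f : ℂ → ℂ}
    (hd : DifferentiableOn ℂ f (ball 0 1)) (hf : MapsTo f (ball 0 1) (ball 0 1)) :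
    ‖deriv f 0‖ ≤ 1 - ‖f 0‖ ^ 2 := by
  set c := f 0
  have hc : ‖c‖ < 1 := mem_ball_zero_iff.mp (hf (mem_ball_self one_pos))
  have hlt : ∀ z ∈ ball (0 : ℂ) 1, ‖f z - c‖ < ‖1 - conj c * f z‖ := fun z hz =>
    norm_sub_lt_norm_one_sub_conj_mul hc (mem_ball_zero_iff.mp (hf hz))
  have hden : ∀ z ∈ ball (0 : ℂ) 1, 1 - conj c * f z ≠ 0 := fun z hz =>
    norm_pos_iff.mp ((norm_nonneg _).trans_lt (hlt z hz))
  set φ : ℂ → ℂ := fun z => (f z - c) / (1 - conj c * f z)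
  have hφd : DifferentiableOn ℂ φ (ball 0 1) :=
    (hd.sub_const c).div ((differentiableOn_const 1).sub (hd.const_mul _)) hden
  have hφ : MapsTo φ (ball 0 1) (closedBall (φ 0) 1) := by
    intro z hz
    rw [show φ 0 = 0 by simp [φ, c], mem_closedBall_zero_iff, norm_div]
    exact div_le_one_of_le₀ (hlt z hz).le (norm_nonneg _)
  have hden0 : 1 - conj c * c = ((1 - ‖c‖ ^ 2 : ℝ) : ℂ) := by
    rw [← normSq_eq_conj_mul_self, normSq_eq_norm_sq]; push_cast; ring
  have hderiv : deriv φ 0 = deriv f 0 / ((1 - ‖c‖ ^ 2 : ℝ) : ℂ) := by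
    have hf' : HasDerivAt f (deriv f 0) 0 :=
      (hd.differentiableAt (ball_mem_nhds 0 one_pos)).hasDerivAt
    have hφ' : HasDerivAt φ _ 0 := (hf'.sub_const c).div ((hf'.const_mul (conj c)).const_sub 1)
      (hden 0 (mem_ball_self one_pos))
    rw [hφ'.deriv, ← hden0]
    simp only [c, sub_self, zero_mul, sub_zero]
    field_simp [hden 0 (mem_ball_self one_pos)]
  have hpos : 0 < 1 - ‖c‖ ^ 2 := by nlinarith [norm_nonneg c]
  have hschwarz := norm_deriv_le_one_of_mapsTo_ball hφd hφ one_pos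
  rwa [hderiv, norm_div, norm_real, Real.norm_of_nonneg hpos.le, div_le_one hpos] at hschwarz

theorem norm_deriv_le_one_sub_sq_of_mapsTo_closedBall {f : ℂ → ℂ}
    (hd : DifferentiableOn ℂ f (ball 0 1)) (hf : MapsTo f (ball 0 1) (closedBall 0 1)) :
    ‖deriv f 0‖ ≤ 1 - ‖f 0‖ ^ 2 := by
  have hscaled : ∀ t ∈ Ioo (0 : ℝ) 1, 0 ≤ 1 - t ^ 2 * ‖f 0‖ ^ 2 - t * ‖deriv f 0‖ := by
    intro t ⟨ht0, ht1⟩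
    have hmaps : MapsTo (fun z => (t : ℂ) * f z) (ball 0 1) (ball 0 1) := by
      intro z hz
      rw [mem_ball_zero_iff, norm_mul, norm_real, Real.norm_of_nonneg ht0.le]
      exact (mul_le_of_le_one_right ht0.le (mem_closedBall_zero_iff.mp (hf hz))).trans_lt ht1
    have h := norm_deriv_le_one_sub_sq_of_mapsTo_ball (hd.const_mul _) hmaps
    rw [deriv_const_mul _ (hd.differentiableAt (ball_mem_nhds 0 one_pos)), norm_mul, norm_mul,
      norm_real, Real.norm_of_nonneg ht0.le] at h
    nlinarith
  have hlim : Tendsto (fun t : ℝ => 1 - t ^ 2 * ‖f 0‖ ^ 2 - t * ‖deriv f 0‖) (𝓝[<] 1)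
      (𝓝 (1 - 1 ^ 2 * ‖f 0‖ ^ 2 - 1 * ‖deriv f 0‖)) :=
    (Continuous.tendsto (by fun_prop) 1).mono_left nhdsWithin_le_nhds
  have hlimit := ge_of_tendsto hlim (eventually_of_mem (Ioo_mem_nhdsLT zero_lt_one) hscaled)
  linarith

theorem norm_cpow_nat_inv_lt_one {w : ℂ} (hw : ‖w‖ < 1) {n : ℕ} (hn : n ≠ 0) :
    ‖w ^ (n⁻¹ : ℂ)‖ < 1 := by
  rwa [← pow_lt_one_iff_of_nonneg (norm_nonneg _) hn, ← norm_pow, cpow_nat_inv_pow w hn]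

end Complex

theorem hasFPowerSeriesOnBall_ofScalars_of_hasSum {f : ℂ → ℂ} {a : ℕ → ℂ} {r : NNReal}
    (hr : 0 < r) (hsum : ∀ z ∈ ball (0 : ℂ) r, HasSum (fun n => a n * z ^ n) (f z)) :
    HasFPowerSeriesOnBall f (FormalMultilinearSeries.ofScalars ℂ a) 0 r where
  r_le := by
    refine ENNReal.le_of_forall_nnreal_lt fun s hs => ?_
    have hs' : ((s : ℝ) : ℂ) ∈ ball (0 : ℂ) r := by
      simpa [abs_of_nonneg s.2] using hs
    refine (FormalMultilinearSeries.ofScalars ℂ a).le_radius_of_tendsto (l := 0) ?_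
    simpa [abs_of_nonneg s.2] using (hsum _ hs').summable.tendsto_atTop_zero.norm
  r_pos := by simpa using hr
  hasSum := fun {y} hy => by
    simpa [FormalMultilinearSeries.ofScalars_apply_eq, mul_comm] using hsum y (by simpa using hy)

theorem norm_coeff_one_le_one_sub_sq {f : ℂ → ℂ} {a : ℕ → ℂ}
    (hsum : ∀ z ∈ ball (0 : ℂ) 1, HasSum (fun n => a n * z ^ n) (f z))
    (hbd : ∀ z ∈ ball (0 : ℂ) 1, ‖f z‖ ≤ 1) : ‖a 1‖ ≤ 1 - ‖a 0‖ ^ 2 := by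
  have hps := hasFPowerSeriesOnBall_ofScalars_of_hasSum one_pos (by simpa using hsum)
  have hd : DifferentiableOn ℂ f (ball 0 1) := by
    simpa using (Metric.eball_coe (x := (0 : ℂ)) (ε := 1) ▸ hps.differentiableOn)
  have hf0 : f 0 = a 0 := by simpa using (hps.coeff_zero fun _ => 0).symm
  have hf'0 : deriv f 0 = a 1 := by simpa using hps.hasFPowerSeriesAt.deriv
  simpa [hf0, hf'0] using Complex.norm_deriv_le_one_sub_sq_of_mapsTo_closedBall hd
    fun z hz => mem_closedBall_zero_iff.mpr (hbd z hz)

theorem IsPrimitiveRoot.geom_sum_pow_eq_ite {R : Type*} [CommRing R] [IsDomain R] {ω : R} {n : ℕ}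
    (hω : IsPrimitiveRoot ω n) (m : ℕ) :
    ∑ k ∈ range n, (ω ^ m) ^ k = if n ∣ m then (n : R) else 0 := by
  split_ifs with h
  · simp [(hω.pow_eq_one_iff_dvd m).mpr h]
  · have hne : ω ^ m - 1 ≠ 0 := sub_ne_zero.mpr fun h' => h ((hω.pow_eq_one_iff_dvd m).mp h')
    have hmul : (∑ k ∈ range n, (ω ^ m) ^ k) * (ω ^ m - 1) = 0 := by
      rw [geom_sum_mul, ← pow_mul, mul_comm, pow_mul, hω.pow_eq_one, one_pow, sub_self]
    exact (mul_eq_zero.mp hmul).resolve_right hne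

theorem norm_inv_natCast_mul_sum_range_le {u : ℕ → ℂ} {n : ℕ} {C : ℝ} (hC : 0 ≤ C)
    (hu : ∀ k < n, ‖u k‖ ≤ C) : ‖(n : ℂ)⁻¹ * ∑ k ∈ range n, u k‖ ≤ C := by
  rcases Nat.eq_zero_or_pos n with rfl | hn
  · simpa using hC
  have hsum : ‖∑ k ∈ range n, u k‖ ≤ n * C := by
    simpa using (norm_sum_le _ _).trans (sum_le_card_nsmul _ _ C fun k hk => hu k (mem_range.mp hk))
  rw [norm_mul, norm_inv, norm_natCast, inv_mul_le_iff₀ (by exact_mod_cast hn)]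
  exact hsum

theorem pow_mul_mem_ball_zero {ω z : ℂ} {R : ℝ} (hω : ‖ω‖ = 1) (hz : z ∈ ball (0 : ℂ) R) (k : ℕ) :
    ω ^ k * z ∈ ball (0 : ℂ) R := by
  simpa [hω] using hz

theorem hasSum_average_rotations {f : ℂ → ℂ} {a : ℕ → ℂ} {R : ℝ} {n : ℕ} {ω : ℂ}
    (hω : IsPrimitiveRoot ω n) (hn : n ≠ 0)
    (hsum : ∀ z ∈ ball (0 : ℂ) R, HasSum (fun m => a m * z ^ m) (f z))
    {z : ℂ} (hz : z ∈ ball (0 : ℂ) R) :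
    HasSum (fun j => a (n * j) * z ^ (n * j)) ((n : ℂ)⁻¹ * ∑ k ∈ range n, f (ω ^ k * z)) := by
  have hω1 : ‖ω‖ = 1 := Complex.norm_eq_one_of_pow_eq_one hω.pow_eq_one hn
  have hterm : ∀ m, (n : ℂ)⁻¹ * ∑ k ∈ range n, a m * (ω ^ k * z) ^ m
      = if n ∣ m then a m * z ^ m else 0 := fun m => by
    have hrot_pow : ∀ k, a m * (ω ^ k * z) ^ m = a m * z ^ m * (ω ^ m) ^ k := fun k => by ring
    simp only [hrot_pow, ← mul_sum, hω.geom_sum_pow_eq_ite m]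
    split_ifs
    · field_simp
    · simp
  have h := (hasSum_sum (s := range n) fun k _ =>
    hsum _ (pow_mul_mem_ball_zero hω1 hz k)).mul_left (n : ℂ)⁻¹
  simp only [hterm] at h
  have hzero : ∀ m ∉ Set.range (n * ·), (if n ∣ m then a m * z ^ m else 0) = 0 := by
    intro m hm
    rw [if_neg]
    rintro ⟨j, rfl⟩
    exact hm ⟨j, rfl⟩
  simpa [Function.comp_def] using ((mul_right_injective₀ hn).hasSum_iff hzero).mpr h

theorem stmt_0 (f : ℂ → ℂ) (a : ℕ → ℂ)
    (hsum : ∀ z ∈ ball (0 : ℂ) 1, HasSum (fun n : ℕ => a n * z ^ n) (f z))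
    (hbd : ∀ z ∈ ball (0 : ℂ) 1, ‖f z‖ ≤ 1) :
    ∀ n : ℕ, 1 ≤ n → ‖a n‖ ≤ 1 - ‖a 0‖ ^ 2 := by
  intro n hn
  have hn0 : n ≠ 0 := by omega
  set ω := Complex.exp (2 * Real.pi * Complex.I / n)
  have hω : IsPrimitiveRoot ω n := Complex.isPrimitiveRoot_exp n hn0
  have hω1 : ‖ω‖ = 1 := Complex.norm_eq_one_of_pow_eq_one hω.pow_eq_one hn0
  have hroot : ∀ w ∈ ball (0 : ℂ) 1, w ^ (n⁻¹ : ℂ) ∈ ball (0 : ℂ) 1 := fun w hw => by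
    simpa using Complex.norm_cpow_nat_inv_lt_one (mem_ball_zero_iff.mp hw) hn0
  set g : ℂ → ℂ := fun w => (n : ℂ)⁻¹ * ∑ k ∈ range n, f (ω ^ k * w ^ (n⁻¹ : ℂ))
  have hgsum : ∀ w ∈ ball (0 : ℂ) 1, HasSum (fun j => a (n * j) * w ^ j) (g w) := fun w hw => by
    simpa [pow_mul, Complex.cpow_nat_inv_pow w hn0] using
      hasSum_average_rotations hω hn0 hsum (hroot w hw)
  have hgbd : ∀ w ∈ ball (0 : ℂ) 1, ‖g w‖ ≤ 1 := fun w hw =>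
    norm_inv_natCast_mul_sum_range_le zero_le_one fun k _ =>
      hbd _ (pow_mul_mem_ball_zero hω1 (hroot w hw) k)
  simpa using norm_coeff_one_le_one_sub_sq hgsum hgbd
end

section
/- The equation 3(1-r) log(1/(1-r)) - 2r = 0 has a unique root R in (0,1), and 3(1-r) log(1/(1-r)) - 2r > 0 for 0 < r < R while 3(1-r) log(1/(1-r)) - 2r < 0 for R < r < 1. -/
/-!
Writing `log (1 / (1 - r)) = -log (1 - r)`, the function is `3 negMulLog (1 - r) - 2 r`, which is
strictly concave on `(-∞, 1]`. It vanishes at `0`, is positive at `1/2` (as `log 2 > 2/3`) and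
equals `-2` at `1`, so it has a root `R` in `(1/2, 1)`. A strictly concave function lies strictly
above the smaller of its values at the ends of any chord; on the chord `[0, R]` this gives
positivity, and on a chord `[1/2, r]` with `R < r` it forces the value at `r` to be negative.
-/

open Real Set

section StrictConcave

theorem StrictConcaveOn.comp_const_sub {𝕜 E β : Type*} [Field 𝕜] [LinearOrder 𝕜]
    [IsStrictOrderedRing 𝕜] [AddCommGroup E] [Module 𝕜 E] [AddCommMonoid β] [PartialOrder β]
    [SMul 𝕜 β] {s : Set E} {f : E → β} (hf : StrictConcaveOn 𝕜 s f) (c : E) :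
    StrictConcaveOn 𝕜 ((c - ·) ⁻¹' s) (fun x => f (c - x)) := by
  have combo : ∀ x y : E, ∀ a b : 𝕜, a + b = 1 → c - (a • x + b • y) = a • (c - x) + b • (c - y) :=
    fun x y a b hab => by
      rw [smul_sub, smul_sub, sub_add_sub_comm, Convex.combo_self hab]
  refine ⟨fun x hx y hy a b ha hb hab => ?_, fun x hx y hy hxy a b ha hb hab => ?_⟩
  · simpa only [mem_preimage, combo x y a b hab] using hf.1 hx hy ha hb hab
  · show a • f (c - x) + b • f (c - y) < f (c - (a • x + b • y))
    rw [combo x y a b hab]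
    exact hf.2 hx hy (fun h => hxy (sub_right_injective h)) ha hb hab

theorem StrictConcaveOn.const_mul {E : Type*} [AddCommGroup E] [Module ℝ E] {s : Set E}
    {f : E → ℝ} (hf : StrictConcaveOn ℝ s f) {c : ℝ} (hc : 0 < c) :
    StrictConcaveOn ℝ s (fun x => c * f x) := by
  refine ⟨hf.1, fun x hx y hy hxy a b ha hb hab => ?_⟩
  have h := hf.2 hx hy hxy ha hb hab
  simp only [smul_eq_mul] at h ⊢
  calc a * (c * f x) + b * (c * f y) = c * (a * f x + b * f y) := by ring
    _ < c * f (a • x + b • y) := mul_lt_mul_of_pos_left h hc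

variable {s : Set ℝ} {f : ℝ → ℝ} {a b r : ℝ}

theorem StrictConcaveOn.pos_of_mem_Ioo (hf : StrictConcaveOn ℝ s f) (ha : a ∈ s) (hb : b ∈ s)
    (hfa : 0 ≤ f a) (hfb : 0 ≤ f b) (hr : r ∈ Ioo a b) : 0 < f r := by
  have hab : a < b := hr.1.trans hr.2
  rw [← openSegment_eq_Ioo hab] at hr
  exact (le_min hfa hfb).trans_lt (hf.lt_on_openSegment ha hb hab.ne hr)

theorem StrictConcaveOn.neg_of_lt (hf : StrictConcaveOn ℝ s f) (ha : a ∈ s) (hr : r ∈ s)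
    (hab : a < b) (hbr : b < r) (hfa : 0 < f a) (hfb : f b ≤ 0) : f r < 0 := by
  have hb : b ∈ openSegment ℝ a r := by rw [openSegment_eq_Ioo (hab.trans hbr)]; exact ⟨hab, hbr⟩
  have hmin := hf.lt_on_openSegment ha hr (hab.trans hbr).ne hb
  by_contra! hfr
  exact (le_min hfa.le hfr).not_gt (hmin.trans_le hfb)

end StrictConcave

noncomputable def cesaroBohrFun (r : ℝ) : ℝ := 3 * (1 - r) * log (1 / (1 - r)) - 2 * r

theorem cesaroBohrFun_eq_negMulLog (r : ℝ) : cesaroBohrFun r = 3 * negMulLog (1 - r) - 2 * r := by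
  rw [cesaroBohrFun, negMulLog, one_div, log_inv]
  ring

theorem continuous_cesaroBohrFun : Continuous cesaroBohrFun := by
  simp only [funext cesaroBohrFun_eq_negMulLog]
  fun_prop

theorem strictConcaveOn_cesaroBohrFun : StrictConcaveOn ℝ (Iic 1) cesaroBohrFun := by
  have hdom : ((1 : ℝ) - ·) ⁻¹' Ici 0 = Iic 1 := by ext; simp
  have hconc := (strictConcaveOn_negMulLog.comp_const_sub 1).const_mul (by norm_num : (0 : ℝ) < 3)
  rw [hdom] at hconc
  simp only [funext cesaroBohrFun_eq_negMulLog]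
  exact hconc.sub_convexOn ((convexOn_id (convex_Iic 1)).smul (by norm_num : (0 : ℝ) ≤ 2))

theorem cesaroBohrFun_zero : cesaroBohrFun 0 = 0 := by simp [cesaroBohrFun]

theorem cesaroBohrFun_one : cesaroBohrFun 1 = -2 := by norm_num [cesaroBohrFun]

theorem cesaroBohrFun_half_pos : 0 < cesaroBohrFun (1 / 2) := by
  have hlog2 := log_two_gt_d9
  norm_num [cesaroBohrFun]
  linarith

theorem exists_cesaroBohrFun_eq_zero : ∃ R ∈ Ioo (1 / 2 : ℝ) 1, cesaroBohrFun R = 0 :=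
  intermediate_value_Ioo' (by norm_num) continuous_cesaroBohrFun.continuousOn
    ⟨by rw [cesaroBohrFun_one]; norm_num, cesaroBohrFun_half_pos⟩

theorem stmt_7 :
    ∃ R : ℝ, R ∈ Set.Ioo (0 : ℝ) 1
      ∧ 3 * (1 - R) * Real.log (1 / (1 - R)) - 2 * R = 0
      ∧ (∀ r : ℝ, 0 < r → r < R → 0 < 3 * (1 - r) * Real.log (1 / (1 - r)) - 2 * r)
      ∧ (∀ r : ℝ, R < r → r < 1 → 3 * (1 - r) * Real.log (1 / (1 - r)) - 2 * r < 0)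
      ∧ ∀ r ∈ Set.Ioo (0 : ℝ) 1,
          3 * (1 - r) * Real.log (1 / (1 - r)) - 2 * r = 0 → r = R := by
  obtain ⟨R, ⟨hR_half, hR_one⟩, hR⟩ := exists_cesaroBohrFun_eq_zero
  have hconc := strictConcaveOn_cesaroBohrFun
  have pos : ∀ r, 0 < r → r < R → 0 < cesaroBohrFun r := fun r h0 hR' =>
    hconc.pos_of_mem_Ioo (by norm_num) (mem_Iic.2 hR_one.le) cesaroBohrFun_zero.ge hR.ge ⟨h0, hR'⟩
  have neg : ∀ r, R < r → r < 1 → cesaroBohrFun r < 0 := fun r hR' h1 =>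
    hconc.neg_of_lt (by norm_num) (mem_Iic.2 h1.le) hR_half hR' cesaroBohrFun_half_pos hR.le
  refine ⟨R, ⟨by linarith, hR_one⟩, hR, pos, neg, fun r hr hr0 => ?_⟩
  rcases lt_trichotomy r R with h | h | h
  · exact absurd hr0 (pos r hr.1 h).ne'
  · exact h
  · exact absurd hr0 (neg r h hr.2).ne
end

section
/- For λ ∈ (0,1) and 0 < r < 1, the function f(t) = (λ-t)/(1-λt) with coefficients a_0 = λ, a_s = λ^{s-1}(λ^2-1) for s ≥ 1 satisfies Σ_{n≥0} (Σ_{k=0}^n |a_k|) r^n = 1/(1-r) - (1-λ)(1-3r)/(1-r) + (1-λ)·(r/(1-r))·((λ+3λr-2)/(1-λr)). -/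
open Finset

theorem stmt_9 (l r : ℝ) (hl0 : 0 < l) (hl1 : l < 1) (hr0 : 0 < r) (hr1 : r < 1)
    (a : ℕ → ℝ) (ha0 : a 0 = l) (has : ∀ s : ℕ, 1 ≤ s → a s = l ^ (s - 1) * (l ^ 2 - 1)) :
    ∑' n : ℕ, (∑ k ∈ range (n + 1), |a k|) * r ^ n
      = 1 / (1 - r) - (1 - l) * (1 - 3 * r) / (1 - r)
        + (1 - l) * (r / (1 - r)) * ((l + 3 * l * r - 2) / (1 - l * r)) := by
  have hS : ∀ n : ℕ, (∑ k ∈ range (n + 1), |a k|) = 1 + 2 * l - (1 + l) * l ^ n := by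
    intro n
    induction n with
    | zero => simp [ha0, abs_of_pos hl0]; ring
    | succ n ih =>
      rw [Finset.sum_range_succ, ih, has (n + 1) (by omega)]
      have h1 : |l ^ (n + 1 - 1) * (l ^ 2 - 1)| = l ^ n * (1 - l ^ 2) := by
        simp only [Nat.add_sub_cancel]; rw [abs_mul, abs_of_pos (pow_pos hl0 n), abs_of_neg (by nlinarith)]
        ring
      rw [h1]; ring
  have h1 : ∀ n : ℕ, (∑ k ∈ range (n + 1), |a k|) * r ^ n
      = (1 + 2 * l) * r ^ n - (1 + l) * (l * r) ^ n := by
    intro n; rw [hS n, mul_pow]; ring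
  have hlr : |l * r| < 1 := by
    rw [abs_of_pos (mul_pos hl0 hr0)]; nlinarith
  have hrr : |r| < 1 := by rw [abs_of_pos hr0]; exact hr1
  have s1 : Summable (fun n : ℕ => (1 + 2 * l) * r ^ n) :=
    (summable_geometric_of_lt_one hr0.le hr1).mul_left _
  have s2 : Summable (fun n : ℕ => (1 + l) * (l * r) ^ n) :=
    (summable_geometric_of_lt_one (mul_pos hl0 hr0).le (by nlinarith)).mul_left _
  calc ∑' n : ℕ, (∑ k ∈ range (n + 1), |a k|) * r ^ n
      = ∑' n : ℕ, ((1 + 2 * l) * r ^ n - (1 + l) * (l * r) ^ n) := by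
        exact tsum_congr h1
    _ = (1 + 2 * l) * ∑' n : ℕ, r ^ n - (1 + l) * ∑' n : ℕ, (l * r) ^ n := by
        rw [Summable.tsum_sub s1 s2, tsum_mul_left, tsum_mul_left]
    _ = (1 + 2 * l) * (1 - r)⁻¹ - (1 + l) * (1 - l * r)⁻¹ := by
        rw [tsum_geometric_of_lt_one hr0.le hr1,
          tsum_geometric_of_lt_one (mul_pos hl0 hr0).le (by nlinarith)]
    _ = 1 / (1 - r) - (1 - l) * (1 - 3 * r) / (1 - r)
        + (1 - l) * (r / (1 - r)) * ((l + 3 * l * r - 2) / (1 - l * r)) := by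
        have h2 : (1 : ℝ) - r ≠ 0 := by nlinarith
        have h3 : (1 : ℝ) - l * r ≠ 0 := by nlinarith
        field_simp
        ring
end

section
/- For x ∈ [0,1) and 0 < r ≤ 1/3, the quantity G(x,r) = x/(1-r) + (1-x^2) r/(1-r)^2 satisfies G(x,r) ≤ 1/(1-r). -/
theorem stmt_11 (x r : ℝ) (hx0 : 0 ≤ x) (hx1 : x < 1) (hr0 : 0 < r) (hr : r ≤ 1 / 3) :
    x / (1 - r) + (1 - x ^ 2) * r / (1 - r) ^ 2 ≤ 1 / (1 - r) := by
  have h1 : 0 < 1 - r := by linarith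
  have h2 : (2 + x) * r ≤ 1 := by nlinarith
  have key : 0 ≤ (1 - x) * (1 - (2 + x) * r) :=
    mul_nonneg (by linarith) (by linarith)
  rw [div_add_div _ _ (by positivity) (by positivity), div_le_div_iff₀ (by positivity) h1]
  nlinarith [mul_nonneg (mul_nonneg key h1.le) h1.le, mul_nonneg key h1.le, key]
end

section
/- For x ∈ [0,1) and 0 < r < 1, let G(x,r) = (x/r) log(1/(1-r)) + (1-x^2)(1/(1-r) - (1/r) log(1/(1-r))). If 3(1-r) log(1/(1-r)) ≥ 2r, then G(x,r) ≤ (1/r) log(1/(1-r)). -/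
theorem stmt_12 (x r : ℝ) (hx0 : 0 ≤ x) (hx1 : x < 1) (hr0 : 0 < r) (hr1 : r < 1)
    (h : 2 * r ≤ 3 * (1 - r) * Real.log (1 / (1 - r))) :
    (x / r) * Real.log (1 / (1 - r))
        + (1 - x ^ 2) * (1 / (1 - r) - (1 / r) * Real.log (1 / (1 - r)))
      ≤ (1 / r) * Real.log (1 / (1 - r)) := by
  have h1r : 0 < 1 - r := by linarith
  set L := Real.log (1 / (1 - r)) with hLdef
  have hL : 0 ≤ L := by
    apply Real.log_nonneg
    rw [le_div_iff₀ h1r]; linarith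
  have key : 2 * r * (1 / (1 - r)) ≤ 3 * L := by
    rw [mul_one_div, div_le_iff₀ h1r]; linarith
  have hru : 0 ≤ r * (1 / (1 - r)) := by positivity
  have main : x * L + (1 - x ^ 2) * (1 / (1 - r) * r - L) ≤ L := by
    nlinarith [mul_le_mul_of_nonneg_left key (mul_nonneg (sub_nonneg.2 hx1.le) hx0),
      mul_le_mul_of_nonneg_left key (sub_nonneg.2 hx1.le),
      mul_nonneg hL (sub_nonneg.2 hx1.le), mul_nonneg hru (sub_nonneg.2 hx1.le)]
  have goalEq : (x / r) * L + (1 - x ^ 2) * (1 / (1 - r) - (1 / r) * L)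
      = (1 / r) * (x * L + (1 - x ^ 2) * (1 / (1 - r) * r - L)) := by
    field_simp
  rw [goalEq]
  exact mul_le_mul_of_nonneg_left main (by positivity)
end

section
/- Let B_X be the unit ball of a complex Banach space X, F : B_X → closure(D^n) holomorphic with F(z) = a + Σ_{s≥1} P_s(z), P_s(z) = (1/s!) D^s F(0)(z^s), and suppose |a_j| = ‖a‖_∞ for all j ∈ {1,…,n}. Then for ‖z‖ = r ≤ 1/3: Σ_{n≥0} ‖a‖_∞ r^n + Σ_{n≥1} Σ_{k=1}^n r^{k-1} ‖P_{n-k+1}(z)‖_∞ ≤ 1/(1-r). -/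
open Metric Finset

/-!
On the complex line through `z`, each coordinate of `F` is a one-variable power series
`a j + ∑ₛ P s z j ζ ^ s` bounded by `1` on the disc of radius `1 / ‖z‖`. Integrating the
nonnegative function `1 - Re (β f)` over circles against `exp (-i k t)`, with `β` a unimodular
constant turning `a j` into `‖a j‖`, gives the Carathéodory-type bound
`‖P s z j‖ ≤ 2 (1 - ‖a j‖) ‖z‖ ^ s`, uniform in `j` because all `‖a j‖` equal `‖a‖`.
Summing, the left-hand side is at most `‖a‖ / (1 - r) + 2 (1 - ‖a‖) r / (1 - r) ^ 2`, which
falls short of `1 / (1 - r)` by `(1 - ‖a‖) (1 - 3 r) / (1 - r) ^ 2 ≥ 0`.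
-/

open Complex Real intervalIntegral ComplexConjugate

lemma integral_exp_int_mul_mul_I (m : ℤ) :
    ∫ t in (0 : ℝ)..2 * π, exp (m * t * I) = if m = 0 then (2 * π : ℂ) else 0 := by
  split_ifs with hm
  · simp [hm]
  · have hc : (m : ℂ) * I ≠ 0 := mul_ne_zero (Int.cast_ne_zero.mpr hm) I_ne_zero
    have hper : exp (m * I * (2 * π : ℝ)) = 1 := by
      rw [← exp_int_mul_two_pi_mul_I m]; push_cast; ring_nf
    simp_rw [mul_right_comm _ _ I]
    rw [integral_exp_mul_complex hc, hper]
    simp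

lemma integral_mul_exp_neg_of_hasSum {d : ℕ → ℂ} {h : ℝ → ℂ} (hd : Summable fun s => ‖d s‖)
    (hh : ∀ t : ℝ, HasSum (fun s : ℕ => d s * exp (s * t * I)) (h t)) (m : ℤ) :
    ∫ t in (0 : ℝ)..2 * π, h t * exp (-m * t * I) = if 0 ≤ m then 2 * π * d m.toNat else 0 := by
  have hterm : ∀ (s : ℕ) (t : ℝ),
      d s * exp (s * t * I) * exp (-m * t * I) = d s * exp (((s - m : ℤ) : ℂ) * t * I) := by
    intro s t
    rw [mul_assoc, ← Complex.exp_add]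
    push_cast
    ring_nf
  have hsum : HasSum (fun s : ℕ => ∫ t in (0 : ℝ)..2 * π, d s * exp (s * t * I) * exp (-m * t * I))
      (∫ t in (0 : ℝ)..2 * π, h t * exp (-m * t * I)) := by
    refine hasSum_integral_of_dominated_convergence (fun s _ => ‖d s‖)
      (fun s => (by fun_prop : Continuous _).aestronglyMeasurable)
      (fun s => .of_forall fun t _ => ?_) (.of_forall fun _ _ => hd) intervalIntegrable_const
      (.of_forall fun t _ => (hh t).mul_right _)
    simp [Complex.norm_exp]
  simp_rw [hterm, integral_const_mul, integral_exp_int_mul_mul_I, sub_eq_zero] at hsum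
  refine hsum.unique ?_
  split_ifs with hm
  · convert hasSum_ite_eq m.toNat (2 * π * d m.toNat) using 2 with s
    split_ifs <;> grind
  · convert hasSum_zero with s
    grind

lemma norm_coeff_le_of_re_le {d : ℕ → ℂ} {h : ℝ → ℂ} (hd : Summable fun s => ‖d s‖)
    (hh : ∀ t : ℝ, HasSum (fun s : ℕ => d s * exp (s * t * I)) (h t)) {A : ℝ}
    (hA : ∀ t, (h t).re ≤ A) {k : ℕ} (hk : 1 ≤ k) :
    ‖d k‖ ≤ 2 * (A - (d 0).re) := by
  have hc : Continuous h := by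
    rw [show h = fun t : ℝ => ∑' s : ℕ, d s * exp (s * t * I) from
      funext fun t => (hh t).tsum_eq.symm]
    refine continuous_tsum (fun s => by fun_prop) hd fun s t => ?_
    simp [Complex.norm_exp]
  have hcoeff := integral_mul_exp_neg_of_hasSum hd hh
  have hmean : ∫ t in (0 : ℝ)..2 * π, (A - (h t).re) = 2 * π * (A - (d 0).re) := by
    have hre : ∫ t in (0 : ℝ)..2 * π, (h t).re = (∫ t in (0 : ℝ)..2 * π, h t).re :=
      intervalIntegral_re (hc.intervalIntegrable _ _)
    have h0 := hcoeff 0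
    simp only [Int.cast_zero, neg_zero, zero_mul, Complex.exp_zero, mul_one] at h0
    rw [integral_sub intervalIntegrable_const
      ((by fun_prop : Continuous fun t => (h t).re).intervalIntegrable _ _), integral_const, hre,
      h0]
    simp
    ring
  -- `conj h` has no Fourier coefficients at positive frequencies.
  have hfreq : ∫ t in (0 : ℝ)..2 * π, ((A - (h t).re : ℝ) : ℂ) * exp (-k * t * I) = -(π * d k) := by
    have hconjE : ∀ t : ℝ, conj (exp (-k * t * I)) = exp (-((-k : ℤ) : ℂ) * t * I) := by
      intro t
      simp [← Complex.exp_conj]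
    have hsplit : ∀ t : ℝ, ((A - (h t).re : ℝ) : ℂ) * exp (-k * t * I)
        = A * exp (((-k : ℤ) : ℂ) * t * I) - h t * exp (-((k : ℤ) : ℂ) * t * I) / 2
          - conj (h t * exp (-((-k : ℤ) : ℂ) * t * I)) / 2 := by
      intro t
      rw [← hconjE, map_mul, Complex.conj_conj]
      push_cast
      rw [Complex.re_eq_add_conj]
      ring
    simp_rw [hsplit]
    rw [integral_sub, integral_sub, integral_const_mul, integral_div, integral_div,
      intervalIntegral_conj, hcoeff, hcoeff, integral_exp_int_mul_mul_I]
    · have hk0 : k ≠ 0 := by omega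
      simp [hk0]
      ring
    all_goals exact Continuous.intervalIntegrable (by fun_prop) _ _
  have hnorm : ∀ t : ℝ, ‖((A - (h t).re : ℝ) : ℂ) * exp (-k * t * I)‖ = A - (h t).re := by
    intro t
    rw [norm_mul, Complex.norm_real, Real.norm_of_nonneg (sub_nonneg.2 (hA t))]
    simp [Complex.norm_exp]
  have hbound : π * ‖d k‖ ≤ π * (2 * (A - (d 0).re)) := by
    calc π * ‖d k‖ = ‖∫ t in (0 : ℝ)..2 * π, ((A - (h t).re : ℝ) : ℂ) * exp (-k * t * I)‖ := by
          rw [hfreq, norm_neg, norm_mul, Complex.norm_real, Real.norm_of_nonneg pi_pos.le]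
      _ ≤ ∫ t in (0 : ℝ)..2 * π, ‖((A - (h t).re : ℝ) : ℂ) * exp (-k * t * I)‖ :=
          norm_integral_le_integral_norm (by positivity)
      _ = π * (2 * (A - (d 0).re)) := by
          simp_rw [hnorm, hmean]
          ring
  exact le_of_mul_le_mul_left hbound pi_pos

lemma norm_coeff_le_of_norm_le {d : ℕ → ℂ} {h : ℝ → ℂ} (hd : Summable fun s => ‖d s‖)
    (hh : ∀ t : ℝ, HasSum (fun s : ℕ => d s * exp (s * t * I)) (h t))
    (hb : ∀ t, ‖h t‖ ≤ 1) {k : ℕ} (hk : 1 ≤ k) :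
    ‖d k‖ ≤ 2 * (1 - ‖d 0‖) := by
  set β := exp ((-arg (d 0) : ℝ) * I)
  have hβ : ‖β‖ = 1 := norm_exp_ofReal_mul_I _
  have hβd : β * d 0 = ‖d 0‖ := by
    conv_lhs => rw [← norm_mul_exp_arg_mul_I (d 0)]
    rw [mul_left_comm, ← Complex.exp_add]
    simp
  have := norm_coeff_le_of_re_le (d := fun s => β * d s) (h := fun t => β * h t)
    (by simpa [norm_mul, hβ] using hd) (fun t => by simpa [mul_assoc] using (hh t).mul_left β)
    (A := 1) (fun t => (re_le_norm _).trans (by rw [norm_mul, hβ, one_mul]; exact hb t)) hk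
  simpa [norm_mul, hβ, hβd] using this

lemma summable_norm_mul_pow_of_summable_mul_pow {𝕜 : Type*} [NormedField 𝕜] {b : ℕ → 𝕜}
    {ζ : 𝕜} (hb : Summable fun m => b m * ζ ^ m) {ρ : ℝ} (hρ0 : 0 ≤ ρ) (hρ : ρ < ‖ζ‖) :
    Summable fun m => ‖b m‖ * ρ ^ m := by
  obtain ⟨C, hC⟩ := hb.tendsto_atTop_zero.norm.bddAbove_range
  have hζ : 0 < ‖ζ‖ := hρ0.trans_lt hρ
  refine .of_nonneg_of_le (fun m => by positivity) (fun m => ?_)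
    ((summable_geometric_of_lt_one (div_nonneg hρ0 hζ.le) ((div_lt_one hζ).2 hρ)).mul_left C)
  calc ‖b m‖ * ρ ^ m = ‖b m * ζ ^ m‖ * (ρ / ‖ζ‖) ^ m := by
        rw [norm_mul, norm_pow, div_pow]
        field_simp
    _ ≤ C * (ρ / ‖ζ‖) ^ m := by
        gcongr
        exact hC ⟨m, rfl⟩

lemma norm_coeff_mul_pow_le {b : ℕ → ℂ} {f : ℂ → ℂ} {R : ℝ} (hR : 0 < R)
    (hf : ∀ ζ : ℂ, ‖ζ‖ < R → HasSum (fun m => b m * ζ ^ m) (f ζ))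
    (hb : ∀ ζ : ℂ, ‖ζ‖ < R → ‖f ζ‖ ≤ 1) {k : ℕ} (hk : 1 ≤ k) :
    ‖b k‖ * R ^ k ≤ 2 * (1 - ‖b 0‖) := by
  have hcircle : ∀ ρ : ℝ, 0 ≤ ρ → ∀ t : ℝ, ‖(ρ : ℂ) * exp (t * I)‖ = ρ := by
    intro ρ hρ t
    rw [norm_mul, norm_exp_ofReal_mul_I, Complex.norm_real, Real.norm_of_nonneg hρ, mul_one]
  have hρ : ∀ ρ ∈ Set.Ioo 0 R, ‖b k‖ * ρ ^ k ≤ 2 * (1 - ‖b 0‖) := by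
    rintro ρ ⟨hρ0, hρR⟩
    have hρ' : ‖(((ρ + R) / 2 : ℝ) : ℂ)‖ < R := by
      rw [Complex.norm_real, Real.norm_of_nonneg (by positivity)]
      linarith
    have hsum : Summable fun m => ‖b m‖ * ρ ^ m := by
      refine summable_norm_mul_pow_of_summable_mul_pow (hf _ hρ').summable hρ0.le ?_
      rw [Complex.norm_real, Real.norm_of_nonneg (by positivity)]
      linarith
    have := norm_coeff_le_of_norm_le (d := fun m => b m * (ρ : ℂ) ^ m)
      (h := fun t => f (ρ * exp (t * I)))
      (by simpa [norm_mul, abs_of_pos hρ0] using hsum)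
      (fun t => by
        convert hf _ ((hcircle ρ hρ0.le t).trans_lt hρR) using 2 with m
        rw [mul_pow, ← Complex.exp_nat_mul]
        ring_nf)
      (fun t => hb _ ((hcircle ρ hρ0.le t).trans_lt hρR)) hk
    simpa [norm_mul, abs_of_pos hρ0] using this
  exact le_of_tendsto ((continuous_const.mul (continuous_pow k)).tendsto R |>.mono_left
    nhdsWithin_le_nhds) (Filter.eventually_of_mem (Ioo_mem_nhdsLT hR) hρ)

lemma map_zero_of_homogeneous {V E : Type*} [AddCommGroup V] [Module ℂ V] [AddCommGroup E]
    [Module ℂ E] {Q : V → E} {s : ℕ} (hs : s ≠ 0)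
    (hQ : ∀ (c : ℂ) (z : V), Q (c • z) = c ^ s • Q z) :
    Q 0 = 0 := by
  simpa [zero_pow hs] using hQ 0 0

section HomogeneousExpansion

variable {X : Type*} [NormedAddCommGroup X] [NormedSpace ℂ X] {n : ℕ} {F : X → Fin n → ℂ}
  {a : Fin n → ℂ} {P : ℕ → X → Fin n → ℂ}

lemma norm_le_one_of_hasSum_homogeneous
    (hexp : ∀ z ∈ ball (0 : X) 1, HasSum (fun s : ℕ => P (s + 1) z) (F z - a))
    (hhom : ∀ s : ℕ, 1 ≤ s → ∀ (c : ℂ) (z : X), P s (c • z) = c ^ s • P s z)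
    (hbd : ∀ z ∈ ball (0 : X) 1, ‖F z‖ ≤ 1) :
    ‖a‖ ≤ 1 := by
  have h0 : (0 : X) ∈ ball 0 1 := mem_ball_self one_pos
  have hP0 (s : ℕ) : P (s + 1) 0 = 0 :=
    map_zero_of_homogeneous s.succ_ne_zero (hhom _ (Nat.le_add_left 1 s))
  have hsum := hexp 0 h0
  simp only [hP0] at hsum
  have hF0 : F 0 = a := sub_eq_zero.1 (hsum.unique hasSum_zero)
  simpa [hF0] using hbd 0 h0

lemma norm_homogeneous_le_of_hasSum
    (hexp : ∀ z ∈ ball (0 : X) 1, HasSum (fun s : ℕ => P (s + 1) z) (F z - a))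
    (hhom : ∀ s : ℕ, 1 ≤ s → ∀ (c : ℂ) (z : X), P s (c • z) = c ^ s • P s z)
    (hbd : ∀ z ∈ ball (0 : X) 1, ‖F z‖ ≤ 1) (ha : ∀ j : Fin n, ‖a j‖ = ‖a‖)
    {s : ℕ} (hs : 1 ≤ s) (z : X) :
    ‖P s z‖ ≤ 2 * (1 - ‖a‖) * ‖z‖ ^ s := by
  rcases eq_or_ne z 0 with rfl | hz
  · simp [map_zero_of_homogeneous (by omega) (hhom s hs), zero_pow (by omega : s ≠ 0)]
  have hz' : 0 < ‖z‖ := norm_pos_iff.2 hz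
  have hmem : ∀ ζ : ℂ, ‖ζ‖ < ‖z‖⁻¹ → ζ • z ∈ ball (0 : X) 1 := by
    intro ζ hζ
    rwa [mem_ball_zero_iff, norm_smul, ← lt_div_iff₀ hz', one_div]
  have hA := norm_le_one_of_hasSum_homogeneous hexp hhom hbd
  refine (pi_norm_le_iff_of_nonneg (by positivity)).2 fun j => ?_
  -- `P 0` is unconstrained, so the constant coefficient is put in by hand.
  have hline := norm_coeff_mul_pow_le (b := fun m => if m = 0 then a j else P m z j)
    (f := fun ζ => F (ζ • z) j) (inv_pos.2 hz') (fun ζ hζ => ?_)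
    (fun ζ hζ => (norm_le_pi_norm _ j).trans (hbd _ (hmem ζ hζ))) hs
  · simp only [if_pos, if_neg (by omega : s ≠ 0), ha j, inv_pow] at hline
    rwa [← div_eq_mul_inv, div_le_iff₀ (by positivity)] at hline
  · have hsum := Pi.hasSum.1 (hexp _ (hmem ζ hζ)) j
    simp only [hhom _ (Nat.le_add_left 1 _), Pi.smul_apply, smul_eq_mul, Pi.sub_apply] at hsum
    rw [← hasSum_nat_add_iff' 1]
    simpa [mul_comm] using hsum

end HomogeneousExpansion

lemma tsum_sum_range_pow_mul_le {r C : ℝ} {p : ℕ → ℝ} (hr0 : 0 ≤ r) (hr1 : r < 1)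
    (hp0 : ∀ s, 0 ≤ p s) (hp : ∀ s, 1 ≤ s → p s ≤ C * r ^ s) :
    ∑' m : ℕ, ∑ k ∈ range (m + 1), r ^ k * p (m + 1 - k) ≤ C * (r / (1 - r) ^ 2) := by
  have hterm : ∀ m : ℕ,
      ∑ k ∈ range (m + 1), r ^ k * p (m + 1 - k) ≤ C * ((m + 1 : ℕ) * r ^ (m + 1)) := by
    intro m
    calc ∑ k ∈ range (m + 1), r ^ k * p (m + 1 - k)
        ≤ ∑ k ∈ range (m + 1), C * r ^ (m + 1) := by
          refine sum_le_sum fun k hk => ?_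
          have hkm : k ≤ m := Nat.lt_succ_iff.1 (mem_range.1 hk)
          calc r ^ k * p (m + 1 - k) ≤ r ^ k * (C * r ^ (m + 1 - k)) := by
                gcongr
                exact hp _ (by omega)
            _ = C * r ^ (m + 1) := by
                rw [mul_left_comm, ← pow_add, Nat.add_sub_cancel' (by omega)]
      _ = C * ((m + 1 : ℕ) * r ^ (m + 1)) := by
          rw [sum_const, card_range, nsmul_eq_mul]
          ring
  have hr : ‖r‖ < 1 := by rwa [Real.norm_of_nonneg hr0]
  have hgeom : HasSum (fun m : ℕ => ((m + 1 : ℕ) : ℝ) * r ^ (m + 1)) (r / (1 - r) ^ 2) := by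
    have := hasSum_coe_mul_geometric_of_norm_lt_one hr
    rw [← hasSum_nat_add_iff' 1] at this
    simpa using this
  exact (Summable.tsum_le_tsum hterm
    (.of_nonneg_of_le (fun m => sum_nonneg fun k _ => by have := hp0 (m + 1 - k); positivity)
      hterm (hgeom.summable.mul_left C)) (hgeom.summable.mul_left C)).trans
    (hgeom.mul_left C).tsum_eq.le

theorem stmt_14_general {X : Type*} [NormedAddCommGroup X] [NormedSpace ℂ X]
    (n : ℕ) (F : X → (Fin n → ℂ)) (a : Fin n → ℂ) (P : ℕ → X → (Fin n → ℂ))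
    (hexp : ∀ z ∈ ball (0 : X) 1, HasSum (fun s : ℕ => P (s + 1) z) (F z - a))
    (hhom : ∀ s : ℕ, 1 ≤ s → ∀ (c : ℂ) (z : X), P s (c • z) = c ^ s • P s z)
    (hbd : ∀ z ∈ ball (0 : X) 1, ‖F z‖ ≤ 1)
    (ha : ∀ j : Fin n, ‖a j‖ = ‖a‖) :
    ∀ (z : X) (r : ℝ), ‖z‖ = r → r ≤ 1 / 3 →
      (∑' m : ℕ, ‖a‖ * r ^ m)
        + ∑' m : ℕ, ∑ k ∈ range (m + 1), r ^ k * ‖P (m + 1 - k) z‖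
      ≤ 1 / (1 - r) := by
  intro z r hz hr
  have hr0 : 0 ≤ r := hz ▸ norm_nonneg z
  have hr1 : r < 1 := by linarith
  have hA := norm_le_one_of_hasSum_homogeneous hexp hhom hbd
  have hP := tsum_sum_range_pow_mul_le hr0 hr1 (fun s => norm_nonneg (P s z))
    (fun s hs => hz ▸ norm_homogeneous_le_of_hasSum hexp hhom hbd ha hs z)
  rw [tsum_mul_left, tsum_geometric_of_lt_one hr0 hr1]
  have hfinal : ‖a‖ * (1 - r)⁻¹ + 2 * (1 - ‖a‖) * (r / (1 - r) ^ 2) ≤ 1 / (1 - r) := by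
    have h1r : 0 < 1 - r := by linarith
    rw [← sub_nonneg]
    have hslack : 1 / (1 - r) - (‖a‖ * (1 - r)⁻¹ + 2 * (1 - ‖a‖) * (r / (1 - r) ^ 2))
        = (1 - ‖a‖) * (1 - 3 * r) / (1 - r) ^ 2 := by
      field_simp
      ring
    rw [hslack]
    exact div_nonneg (mul_nonneg (by linarith) (by linarith)) (by positivity)
  linarith

theorem stmt_14 {X : Type*} [NormedAddCommGroup X] [NormedSpace ℂ X] [CompleteSpace X]
    (n : ℕ) (F : X → (Fin n → ℂ)) (a : Fin n → ℂ) (P : ℕ → X → (Fin n → ℂ))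
    (hF : DifferentiableOn ℂ F (ball (0 : X) 1))
    (hexp : ∀ z ∈ ball (0 : X) 1, HasSum (fun s : ℕ => P (s + 1) z) (F z - a))
    (hhom : ∀ s : ℕ, 1 ≤ s → ∀ (c : ℂ) (z : X), P s (c • z) = c ^ s • P s z)
    (hbd : ∀ z ∈ ball (0 : X) 1, ‖F z‖ ≤ 1)
    (ha : ∀ j : Fin n, ‖a j‖ = ‖a‖) :
    ∀ (z : X) (r : ℝ), ‖z‖ = r → r ≤ 1 / 3 →
      (∑' m : ℕ, ‖a‖ * r ^ m)
        + ∑' m : ℕ, ∑ k ∈ range (m + 1), r ^ k * ‖P (m + 1 - k) z‖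
      ≤ 1 / (1 - r) :=
  stmt_14_general n F a P hexp hhom hbd ha
end

section
/- Let m ≥ 0 be an integer and β > -m. The function G(r) = 1/(β+m) - 2 Σ_{s≥m+1} r^{s-m}/(β+s) is strictly decreasing on (0,1), tends to 1/(β+m) > 0 as r → 0+, and has a unique root R(β) in (0,1). -/
open Filter Set Finset

theorem stmt_16 (m : ℕ) (β : ℝ) (hβ : -(m : ℝ) < β) :
    (∀ r₁ ∈ Set.Ioo (0 : ℝ) 1, ∀ r₂ ∈ Set.Ioo (0 : ℝ) 1, r₁ < r₂ →
        (1 / (β + m) - 2 * ∑' i : ℕ, r₂ ^ (i + 1) / (β + (m + 1 + i)))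
          < 1 / (β + m) - 2 * ∑' i : ℕ, r₁ ^ (i + 1) / (β + (m + 1 + i)))
    ∧ Filter.Tendsto (fun r : ℝ => 1 / (β + m) - 2 * ∑' i : ℕ, r ^ (i + 1) / (β + (m + 1 + i)))
        (nhdsWithin 0 (Set.Ioi 0)) (nhds (1 / (β + m)))
    ∧ 0 < 1 / (β + m)
    ∧ ∃! R : ℝ, R ∈ Set.Ioo (0 : ℝ) 1
        ∧ 1 / (β + m) - 2 * ∑' i : ℕ, R ^ (i + 1) / (β + (m + 1 + i)) = 0 := by
  have hbm : (0:ℝ) < β + m := by linarith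
  have hc1 : ∀ i : ℕ, (1:ℝ) ≤ β + (m + 1 + i) := by
    intro i
    have : (0:ℝ) ≤ (i:ℝ) := Nat.cast_nonneg i
    linarith
  have hc : ∀ i : ℕ, (0:ℝ) < β + (m + 1 + i) := fun i => lt_of_lt_of_le one_pos (hc1 i)
  set S : ℝ → ℝ := fun r => ∑' i : ℕ, r ^ (i + 1) / (β + (m + 1 + i)) with hSdef
  have hgeo : ∀ r : ℝ, 0 ≤ r → r < 1 → Summable (fun i : ℕ => r ^ (i + 1)) := by
    intro r h0 h1
    have := (summable_geometric_of_lt_one h0 h1).mul_left r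
    refine this.congr fun i => ?_
    ring
  have hsum : ∀ r : ℝ, 0 ≤ r → r < 1 →
      Summable (fun i : ℕ => r ^ (i + 1) / (β + (m + 1 + i))) := by
    intro r h0 h1
    refine Summable.of_nonneg_of_le (fun i => div_nonneg (pow_nonneg h0 _) (hc i).le)
      (fun i => div_le_self (pow_nonneg h0 _) (hc1 i)) (hgeo r h0 h1)
  -- strict monotonicity of S
  have hmono : ∀ r₁ r₂ : ℝ, 0 ≤ r₁ → r₁ < r₂ → r₂ < 1 → S r₁ < S r₂ := by
    intro r₁ r₂ h0 h12 h21
    refine Summable.tsum_lt_tsum_of_nonneg (i := 0)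
      (fun i => div_nonneg (pow_nonneg h0 _) (hc i).le)
      (fun i => div_le_div_of_nonneg_right (pow_le_pow_left₀ h0 h12.le _) (hc i).le)
      (div_lt_div_of_pos_right (by simpa using h12) (hc 0))
      (hsum r₂ (h0.trans h12.le) h21)
  -- S r ≤ r * (1-r)⁻¹ and S r ≥ 0 on Ioo 0 1
  have hSnonneg : ∀ r : ℝ, 0 ≤ r → 0 ≤ S r :=
    fun r h0 => tsum_nonneg fun i => div_nonneg (pow_nonneg h0 _) (hc i).le
  have hSle : ∀ r : ℝ, 0 ≤ r → r < 1 → S r ≤ r * (1 - r)⁻¹ := by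
    intro r h0 h1
    have h2 : ∑' i : ℕ, r ^ (i + 1) = r * (1 - r)⁻¹ := by
      have : (fun i : ℕ => r ^ (i + 1)) = fun i : ℕ => r * r ^ i := by
        funext i; ring
      rw [this, tsum_mul_left, tsum_geometric_of_lt_one h0 h1]
    calc S r ≤ ∑' i : ℕ, r ^ (i + 1) :=
          Summable.tsum_le_tsum (fun i => div_le_self (pow_nonneg h0 _) (hc1 i))
            (hsum r h0 h1) (hgeo r h0 h1)
      _ = r * (1 - r)⁻¹ := h2
  have hev : ∀ᶠ r in nhdsWithin (0:ℝ) (Set.Ioi 0), r ∈ Set.Ioo (0:ℝ) 1 := by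
    filter_upwards [eventually_mem_nhdsWithin,
      (eventually_lt_nhds (by norm_num : (0:ℝ) < 1)).filter_mono nhdsWithin_le_nhds]
      with r h1 h2
    exact ⟨h1, h2⟩
  -- S tends to 0 at 0+
  have hS0 : Tendsto S (nhdsWithin (0:ℝ) (Set.Ioi 0)) (nhds 0) := by
    have hg : Tendsto (fun r : ℝ => r * (1 - r)⁻¹) (nhdsWithin (0:ℝ) (Set.Ioi 0)) (nhds 0) := by
      have : Tendsto (fun r : ℝ => r * (1 - r)⁻¹) (nhds 0) (nhds ((0:ℝ) * (1 - 0)⁻¹)) :=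
        tendsto_id.mul ((tendsto_const_nhds.sub tendsto_id).inv₀ (by norm_num))
      simpa using this.mono_left nhdsWithin_le_nhds
    exact squeeze_zero' (hev.mono fun r hr => hSnonneg r hr.1.le)
      (hev.mono fun r hr => hSle r hr.1.le hr.2) hg
  have hGt : Tendsto (fun r : ℝ => 1 / (β + m) - 2 * S r)
      (nhdsWithin (0:ℝ) (Set.Ioi 0)) (nhds (1 / (β + m))) := by
    have : Tendsto (fun r : ℝ => 1 / (β + ↑m) - 2 * S r)
        (nhdsWithin (0:ℝ) (Set.Ioi 0)) (nhds (1 / (β + ↑m) - 2 * 0)) :=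
      Tendsto.sub tendsto_const_nhds (hS0.const_mul 2)
    simpa using this
  have hpos : 0 < 1 / (β + m) := by positivity
  refine ⟨?_, hGt, hpos, ?_⟩
  · intro r₁ hr₁ r₂ hr₂ h12
    have := hmono r₁ r₂ hr₁.1.le h12 hr₂.2
    have h2 : 2 * S r₁ < 2 * S r₂ := by linarith
    exact sub_lt_sub_left h2 _
  -- existence and uniqueness of root
  set G : ℝ → ℝ := fun r => 1 / (β + m) - 2 * S r with hGdef
  have hGanti : ∀ r₁ ∈ Set.Ioo (0:ℝ) 1, ∀ r₂ ∈ Set.Ioo (0:ℝ) 1, r₁ < r₂ → G r₂ < G r₁ := by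
    intro r₁ hr₁ r₂ hr₂ h12
    have := hmono r₁ r₂ hr₁.1.le h12 hr₂.2
    simp only [hGdef]
    linarith
  -- a point where G is positive
  obtain ⟨a, hGa, ha⟩ : ∃ a : ℝ, 0 < G a ∧ a ∈ Set.Ioo (0:ℝ) 1 := by
    have h1 : ∀ᶠ r in nhdsWithin (0:ℝ) (Set.Ioi 0), 0 < G r :=
      hGt.eventually (eventually_gt_nhds hpos)
    exact (h1.and hev).exists
  -- divergence of ∑ 1/(β+(m+1+i))
  have hdiv : ¬ Summable (fun i : ℕ => 1 / (β + (m + 1 + i))) := by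
    intro h
    have h2 : Summable (fun i : ℕ => (β + m + 1) * (1 / (β + (m + 1 + i)))) := h.mul_left _
    have h3 : Summable (fun i : ℕ => 1 / ((i:ℝ) + 1)) := by
      refine Summable.of_nonneg_of_le (fun i => by positivity) (fun i => ?_) h2
      rw [mul_one_div, div_le_div_iff₀ (by positivity) (hc i)]
      have hi : (0:ℝ) ≤ (i:ℝ) := Nat.cast_nonneg i
      nlinarith
    have h4 : Summable (fun i : ℕ => 1 / ((i:ℝ))) := by
      have := (summable_nat_add_iff 1).mpr h3
      exact (summable_nat_add_iff (f := fun n : ℕ => 1 / (n:ℝ)) 1).mp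
        (h3.congr fun i => by push_cast; ring_nf)
    exact Real.not_summable_one_div_natCast h4
  have htend : Tendsto (fun n => ∑ i ∈ Finset.range n, 1 / (β + (m + 1 + i))) atTop atTop :=
    (not_summable_iff_tendsto_nat_atTop_of_nonneg (fun i => div_nonneg zero_le_one (hc i).le)).mp hdiv
  obtain ⟨N, hN⟩ := (htend.eventually_gt_atTop (1 / (β + m))).exists
  set P : ℝ := ∑ i ∈ Finset.range N, 1 / (β + (m + 1 + i)) with hPdef
  have hPpos : 0 < P := lt_trans hpos hN
  -- a point where G is negative
  obtain ⟨b, hGb, hb⟩ : ∃ b : ℝ, G b < 0 ∧ b ∈ Set.Ioo (0:ℝ) 1 := by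
    haveI : (nhdsWithin (1:ℝ) (Set.Ioo 0 1)).NeBot :=
      right_nhdsWithin_Ioo_neBot (by norm_num)
    have ht : Tendsto (fun b : ℝ => b ^ N * P) (nhdsWithin (1:ℝ) (Set.Ioo 0 1)) (nhds P) := by
      have : Tendsto (fun b : ℝ => b ^ N * P) (nhds 1) (nhds ((1:ℝ) ^ N * P)) :=
        ((continuous_pow N).mul continuous_const).tendsto 1
      simpa using this.mono_left nhdsWithin_le_nhds
    have hhalf : 1 / (2 * (β + m)) < P := by
      have : 1 / (2 * (β + m)) < 1 / (β + m) := by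
        rw [div_lt_div_iff₀ (by positivity) hbm]; linarith
      linarith
    have h1 : ∀ᶠ b in nhdsWithin (1:ℝ) (Set.Ioo 0 1), 1 / (2 * (β + m)) < b ^ N * P :=
      ht.eventually (eventually_gt_nhds hhalf)
    obtain ⟨b, hb1, hb2⟩ := (h1.and eventually_mem_nhdsWithin).exists
    refine ⟨b, ?_, hb2⟩
    have hSb : 1 / (2 * (β + m)) < S b := by
      have hle1 : b ^ N * P ≤ ∑ i ∈ Finset.range N, b ^ (i + 1) / (β + (m + 1 + i)) := by
        rw [hPdef, Finset.mul_sum]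
        refine Finset.sum_le_sum fun i hi => ?_
        rw [Finset.mem_range] at hi
        have hbN : b ^ N ≤ b ^ (i + 1) :=
          pow_le_pow_of_le_one hb2.1.le hb2.2.le (by omega)
        rw [mul_one_div]
        exact div_le_div_of_nonneg_right hbN (hc i).le
      have hle2 : ∑ i ∈ Finset.range N, b ^ (i + 1) / (β + (m + 1 + i)) ≤ S b :=
        Summable.sum_le_tsum (Finset.range N)
          (fun i _ => div_nonneg (pow_nonneg hb2.1.le _) (hc i).le)
          (hsum b hb2.1.le hb2.2)
      linarith
    have : 1 / (β + m) < 2 * S b := by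
      rw [div_lt_iff₀ (by positivity)] at hSb ⊢
      linarith
    simp only [hGdef]
    linarith
  have hab : a < b := by
    rcases lt_trichotomy a b with h | h | h
    · exact h
    · exact absurd (h ▸ hGa) (by linarith)
    · exact absurd (hGanti b hb a ha h) (by linarith)
  -- continuity of G on [a, b]
  have hScont : ContinuousOn S (Set.Icc a b) := by
    have hsub : Set.Icc a b ⊆ Set.Icc 0 b := Set.Icc_subset_Icc ha.1.le le_rfl
    refine ContinuousOn.mono ?_ hsub
    refine continuousOn_tsum (u := fun i : ℕ => b ^ (i + 1))
      (fun i => ((continuous_pow _).continuousOn).div_const _)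
      (hgeo b hb.1.le hb.2) (fun n x hx => ?_)
    rw [Real.norm_eq_abs, abs_of_nonneg (div_nonneg (pow_nonneg hx.1 _) (hc n).le)]
    calc x ^ (n + 1) / (β + (m + 1 + n)) ≤ x ^ (n + 1) :=
        div_le_self (pow_nonneg hx.1 _) (hc1 n)
      _ ≤ b ^ (n + 1) := pow_le_pow_left₀ hx.1 hx.2 _
  have hGcont : ContinuousOn G (Set.Icc a b) :=
    continuousOn_const.sub (continuousOn_const.mul hScont)
  obtain ⟨R, hRmem, hRval⟩ :=
    intermediate_value_Icc' hab.le hGcont ⟨hGb.le, hGa.le⟩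
  have hRIoo : R ∈ Set.Ioo (0:ℝ) 1 :=
    ⟨lt_of_lt_of_le ha.1 hRmem.1, lt_of_le_of_lt hRmem.2 hb.2⟩
  refine ⟨R, ⟨hRIoo, hRval⟩, ?_⟩
  intro R' ⟨hR'Ioo, hR'val⟩
  rcases lt_trichotomy R' R with h | h | h
  · exact absurd (hGanti R' hR'Ioo R hRIoo h) (by simp only [hGdef] at hRval hR'val ⊢; linarith)
  · exact h
  · exact absurd (hGanti R hRIoo R' hR'Ioo h) (by simp only [hGdef] at hRval hR'val ⊢; linarith)
end

section
/- Fix β > 0 with β ≠ 1. For x ∈ [0,1) and 0 < r < 1, define G(x,r) = (1/r)[ (x^2+x-1)(1 - (1-r)^{1-β})/(1-β) + (1-x^2)((1-r)^{-β} - 1)/β ]. If 3(1-(1-r)^{1-β})/(1-β) ≥ 2((1-r)^{-β} - 1)/β, then G(x,r) ≤ (1 - (1-r)^{1-β})/((1-β) r). -/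
theorem stmt_19 (β : ℝ) (hβ : 0 < β) (hβ1 : β ≠ 1) (x r : ℝ)
    (hx0 : 0 ≤ x) (hx1 : x < 1) (hr0 : 0 < r) (hr1 : r < 1)
    (h : 2 * (((1 - r) ^ (-β) - 1) / β) ≤ 3 * ((1 - (1 - r) ^ (1 - β)) / (1 - β))) :
    (1 / r) * ((x ^ 2 + x - 1) * (1 - (1 - r) ^ (1 - β)) / (1 - β)
        + (1 - x ^ 2) * ((1 - r) ^ (-β) - 1) / β)
      ≤ (1 - (1 - r) ^ (1 - β)) / ((1 - β) * r) := by
  have hr1' : (0:ℝ) < 1 - r := by linarith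
  set a := (1 - r) ^ (1 - β) with ha
  set b := (1 - r) ^ (-β) with hb
  set A := (1 - a) / (1 - β) with hA'
  set B := (b - 1) / β with hB'
  have hA : 0 ≤ A := by
    rcases lt_or_gt_of_ne hβ1 with h1 | h1
    · apply div_nonneg _ (by linarith)
      have : a ≤ 1 := Real.rpow_le_one hr1'.le (by linarith) (by linarith)
      linarith
    · rw [hA', div_nonneg_iff]
      right
      refine ⟨?_, by linarith⟩
      have : 1 ≤ a := Real.one_le_rpow_of_pos_of_le_one_of_nonpos hr1' (by linarith)
        (by linarith)
      linarith
  have key : (x ^ 2 + x - 1) * A + (1 - x ^ 2) * B ≤ A := by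
    nlinarith [mul_nonneg (by nlinarith : (0:ℝ) ≤ 1 - x ^ 2) (by linarith : (0:ℝ) ≤ 3 * A - 2 * B),
      mul_nonneg hA (sq_nonneg (1 - x))]
  have e : (x ^ 2 + x - 1) * (1 - a) / (1 - β) + (1 - x ^ 2) * (b - 1) / β
      = (x ^ 2 + x - 1) * A + (1 - x ^ 2) * B := by
    rw [hA', hB']; ring
  rw [e]
  have e2 : (1 - a) / ((1 - β) * r) = (1 / r) * A := by
    rw [hA']; field_simp
  rw [e2]
  exact mul_le_mul_of_nonneg_left key (by positivity)
end
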